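/- arXiv:1510.04392 — 2 statements merged into one kernel-verified Lean document; each statement's English description precedes it below -/
import Mathlib

section
/- (Kenny Brown's lemma.) Let M be a model category with finite colimits, let R be a category, and let W_R be a class of morphisms of R that contains all isomorphisms, is closed under composition, and satisfies the two-out-of-three property. If a functor F : M ⥤ R sends every trivial cofibration between cofibrant objects of M to a morphism in W_R, then F sends every weak equivalence between cofibrant objects of M to a morphism in W_R. -/
open CategoryTheory Limits

universe w v u

namespace Paper

/-- `f` is a retract of `g` in the arrow category. -/
def IsRetract {M : Type u} [Category.{v} M] {a b x y : M} (f : a ⟶ b) (g : x ⟶ y) : Prop :=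
  ∃ (i : a ⟶ x) (r : x ⟶ a) (i' : b ⟶ y) (r' : y ⟶ b),
    i ≫ r = 𝟙 a ∧ i' ≫ r' = 𝟙 b ∧ i ≫ g = f ≫ i' ∧ g ≫ r' = r ≫ f

/-- A (Quillen) model structure on a category `M`: classes of weak equivalences,
cofibrations and fibrations, containing all isomorphisms, with the two-out-of-three
property for weak equivalences, all three classes closed under retracts, the lifting
axioms, and the two factorization axioms. -/
structure ModelStructure (M : Type u) [Category.{v} M] where
  W : MorphismProperty M
  Cof : MorphismProperty M
  Fib : MorphismProperty M
  iso_W : MorphismProperty.isomorphisms M ≤ W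
  iso_Cof : MorphismProperty.isomorphisms M ≤ Cof
  iso_Fib : MorphismProperty.isomorphisms M ≤ Fib
  two_of_three : W.HasTwoOutOfThreeProperty
  retract_W : ∀ {a b x y : M} (f : a ⟶ b) (g : x ⟶ y), IsRetract f g → W g → W f
  retract_Cof : ∀ {a b x y : M} (f : a ⟶ b) (g : x ⟶ y), IsRetract f g → Cof g → Cof f
  retract_Fib : ∀ {a b x y : M} (f : a ⟶ b) (g : x ⟶ y), IsRetract f g → Fib g → Fib f
  lift_Cof_trivFib : ∀ {a b x y : M} (i : a ⟶ b) (p : x ⟶ y),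
    Cof i → W p → Fib p → HasLiftingProperty i p
  lift_trivCof_Fib : ∀ {a b x y : M} (i : a ⟶ b) (p : x ⟶ y),
    Cof i → W i → Fib p → HasLiftingProperty i p
  fact_Cof_trivFib : ∀ {x y : M} (f : x ⟶ y),
    ∃ (z : M) (i : x ⟶ z) (p : z ⟶ y), Cof i ∧ W p ∧ Fib p ∧ i ≫ p = f
  fact_trivCof_Fib : ∀ {x y : M} (f : x ⟶ y),
    ∃ (z : M) (i : x ⟶ z) (p : z ⟶ y), Cof i ∧ W i ∧ Fib p ∧ i ≫ p = f

variable {M : Type u} [Category.{v} M]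

/-- An object is cofibrant if the map from the initial object to it is a cofibration. -/
def ModelStructure.Cofibrant [HasInitial M] (S : ModelStructure M) (x : M) : Prop :=
  S.Cof (initial.to x)

/-- An object is fibrant if the map from it to the terminal object is a fibration. -/
def ModelStructure.Fibrant [HasTerminal M] (S : ModelStructure M) (x : M) : Prop :=
  S.Fib (terminal.from x)

end Paper

namespace Paper.ModelStructure

variable {M : Type u} [Category.{v} M] (S : ModelStructure M)

/-- The retract argument: a morphism with the left lifting property against trivial fibrations
is a retract of the cofibration in its (cofibration, trivial fibration) factorization. -/
theorem cof_eq_llp_trivFib : S.Cof = (S.W ⊓ S.Fib).llp := by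
  refine le_antisymm (fun _ _ i hi _ _ p ⟨hpW, hpF⟩ ↦ S.lift_Cof_trivFib i p hi hpW hpF) ?_
  intro a b i hi
  obtain ⟨z, j, q, hj, hqW, hqF, hfac⟩ := S.fact_Cof_trivFib i
  have := hi q ⟨hqW, hqF⟩
  have sq : CommSq j i q (𝟙 b) := ⟨by simp [hfac]⟩
  exact S.retract_Cof i j
    ⟨𝟙 a, 𝟙 a, sq.lift, q, by simp, sq.fac_right, by simp [sq.fac_left], by simp [hfac]⟩ hj

instance : S.Cof.IsStableUnderComposition := S.cof_eq_llp_trivFib ▸ inferInstance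

instance : S.Cof.IsStableUnderCobaseChange := S.cof_eq_llp_trivFib ▸ inferInstance

variable {S} [HasInitial M]

theorem Cofibrant.of_cof {a b : M} {f : a ⟶ b} (ha : S.Cofibrant a) (hf : S.Cof f) :
    S.Cofibrant b := by
  rw [Cofibrant, Subsingleton.elim (initial.to b) (initial.to a ≫ f)]
  exact S.Cof.comp_mem _ _ ha hf

variable [HasBinaryCoproducts M]

theorem cof_coprod_inl {a b : M} (hb : S.Cofibrant b) : S.Cof (coprod.inl : a ⟶ a ⨿ b) :=
  S.Cof.of_isPushout (IsPushout.of_hasBinaryCoproduct' a b) hb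

theorem cof_coprod_inr {a b : M} (ha : S.Cofibrant a) : S.Cof (coprod.inr : b ⟶ a ⨿ b) :=
  S.Cof.of_isPushout (IsPushout.of_hasBinaryCoproduct' a b).flip ha

/-- Ken Brown's factorization: factor `(f, 𝟙 b) : a ⨿ b ⟶ b` as a cofibration `i` followed by
a trivial fibration `p`; the two coproduct inclusions followed by `i` are then trivial
cofibrations by two-out-of-three. -/
theorem exists_trivCof_comp_retraction_of_W {a b : M} (f : a ⟶ b)
    (ha : S.Cofibrant a) (hb : S.Cofibrant b) (hf : S.W f) :
    ∃ (z : M) (j : a ⟶ z) (s : b ⟶ z) (p : z ⟶ b), S.Cofibrant z ∧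
      S.W j ∧ S.Cof j ∧ S.W s ∧ S.Cof s ∧ j ≫ p = f ∧ s ≫ p = 𝟙 b := by
  have := S.two_of_three
  obtain ⟨z, i, p, hi, hpW, -, hfac⟩ := S.fact_Cof_trivFib (coprod.desc f (𝟙 b))
  have hj : (coprod.inl ≫ i) ≫ p = f := by rw [Category.assoc, hfac, coprod.inl_desc]
  have hs : (coprod.inr ≫ i) ≫ p = 𝟙 b := by rw [Category.assoc, hfac, coprod.inr_desc]
  have hsCof : S.Cof (coprod.inr ≫ i) := S.Cof.comp_mem _ _ (cof_coprod_inr ha) hi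
  refine ⟨z, coprod.inl ≫ i, coprod.inr ≫ i, p, hb.of_cof hsCof,
    S.W.of_postcomp _ p hpW (hj ▸ hf), S.Cof.comp_mem _ _ (cof_coprod_inl hb) hi,
    S.W.of_postcomp _ p hpW (hs ▸ S.iso_W _ (.infer_property (𝟙 b))), hsCof, hj, hs⟩

end Paper.ModelStructure

section Statement2

open Paper

theorem kenny_brown_lemma_general
    {M : Type u} {R : Type v} [Category M] [Category R]
    [HasFiniteColimits M] [HasInitial M]
    (S : ModelStructure M)
    (WR : MorphismProperty R)
    (hWR_iso : MorphismProperty.isomorphisms R ≤ WR)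
    (hWR_23 : WR.HasTwoOutOfThreeProperty)
    (F : M ⥤ R)
    (hF : ∀ {a b : M} (f : a ⟶ b), S.Cofibrant a → S.Cofibrant b →
      S.W f → S.Cof f → WR (F.map f)) :
    ∀ {a b : M} (f : a ⟶ b), S.Cofibrant a → S.Cofibrant b → S.W f → WR (F.map f) := by
  intro a b f ha hb hf
  obtain ⟨z, j, s, p, hz, hjW, hjCof, hsW, hsCof, hj, hs⟩ :=
    S.exists_trivCof_comp_retraction_of_W f ha hb hf
  have hp : WR (F.map p) := by
    refine WR.of_precomp (F.map s) (F.map p) (hF s hb hz hsW hsCof) ?_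
    rw [← F.map_comp, hs, F.map_id]
    exact hWR_iso _ (.infer_property _)
  rw [← hj, F.map_comp]
  exact WR.comp_mem _ _ (hF j ha hz hjW hjCof) hp

/-- **Kenny Brown's lemma.** Let `M` be a model category with finite colimits
and `W_R` a class of morphisms of a category `R` containing all isomorphisms, closed under
composition and satisfying two-out-of-three.  If `F : M ⥤ R` sends trivial cofibrations
between cofibrant objects into `W_R`, then it sends all weak equivalences between cofibrant
objects into `W_R`. -/
theorem kenny_brown_lemma
    {M : Type u} {R : Type v} [Category M] [Category R]
    [HasFiniteColimits M] [HasInitial M]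
    (S : ModelStructure M)
    (WR : MorphismProperty R)
    (hWR_iso : MorphismProperty.isomorphisms R ≤ WR)
    (hWR_comp : WR.IsStableUnderComposition)
    (hWR_23 : WR.HasTwoOutOfThreeProperty)
    (F : M ⥤ R)
    (hF : ∀ {a b : M} (f : a ⟶ b), S.Cofibrant a → S.Cofibrant b →
      S.W f → S.Cof f → WR (F.map f)) :
    ∀ {a b : M} (f : a ⟶ b), S.Cofibrant a → S.Cofibrant b → S.W f → WR (F.map f) :=
  kenny_brown_lemma_general S WR hWR_iso hWR_23 F hF

end Statement2
end

section
/- Let C, D, E be model categories with E having pushouts, and let T : C ⥤ D ⥤ E be a bifunctor such that every functor T(c, −) : D ⥤ E and every functor T(−, d) : C ⥤ E admits a right adjoint, and which satisfies the pushout-product axiom. If w : c₁ → c₂ is a weak equivalence between cofibrant objects of C and d is a cofibrant object of D, then T(w, d) : T(c₁, d) → T(c₂, d) is a weak equivalence in E; and symmetrically, if v : d₁ → d₂ is a weak equivalence between cofibrant objects of D and c is a cofibrant object of C, then T(c, v) : T(c, d₁) → T(c, d₂) is a weak equivalence in E. -/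
open CategoryTheory Limits

universe w v u

namespace Paper

/-- The pushout-product corner map of a bifunctor `T : C ⥤ D ⥤ E`: for `f : c₁ ⟶ c₂` and
`g : d₁ ⟶ d₂`, the induced map `T(c₂, d₁) ⊔_{T(c₁, d₁)} T(c₁, d₂) ⟶ T(c₂, d₂)`. -/
noncomputable def ppCorner {C : Type u₁} {D : Type u₂} {E : Type u₃}
    [Category.{v₁} C] [Category.{v₂} D] [Category.{v₃} E] [HasPushouts E]
    (T : C ⥤ D ⥤ E) {c₁ c₂ : C} {d₁ d₂ : D} (f : c₁ ⟶ c₂) (g : d₁ ⟶ d₂) :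
    pushout ((T.map f).app d₁) ((T.obj c₁).map g) ⟶ (T.obj c₂).obj d₂ :=
  pushout.desc ((T.obj c₂).map g) ((T.map f).app d₂) ((T.map f).naturality g).symm

end Paper

section Statement12

open Paper

section Aux

namespace Paper

variable {M : Type u} [Category.{v} M]

lemma ModelStructure.id_W (S : ModelStructure M) (x : M) : S.W (𝟙 x) :=
  S.iso_W _ (inferInstanceAs (IsIso (𝟙 x)))

lemma ModelStructure.W_comp (S : ModelStructure M) {a b c : M} {f : a ⟶ b} {g : b ⟶ c}
    (hf : S.W f) (hg : S.W g) : S.W (f ≫ g) :=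
  have := S.two_of_three
  S.W.comp_mem f g hf hg

lemma ModelStructure.W_of_postcomp (S : ModelStructure M) {a b c : M} (f : a ⟶ b) (g : b ⟶ c)
    (hg : S.W g) (hfg : S.W (f ≫ g)) : S.W f :=
  have := S.two_of_three
  S.W.of_postcomp f g hg hfg

lemma ModelStructure.W_of_precomp (S : ModelStructure M) {a b c : M} (f : a ⟶ b) (g : b ⟶ c)
    (hf : S.W f) (hfg : S.W (f ≫ g)) : S.W g :=
  have := S.two_of_three
  S.W.of_precomp f g hf hfg

lemma ModelStructure.Cof_comp (S : ModelStructure M) {a b c : M} {i : a ⟶ b} {j : b ⟶ c}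
    (hi : S.Cof i) (hj : S.Cof j) : S.Cof (i ≫ j) := by
  obtain ⟨z, q, p, hq, hpW, hpF, hfac⟩ := S.fact_Cof_trivFib (i ≫ j)
  haveI : HasLiftingProperty i p := S.lift_Cof_trivFib i p hi hpW hpF
  haveI : HasLiftingProperty j p := S.lift_Cof_trivFib j p hj hpW hpF
  have sq : CommSq q (i ≫ j) p (𝟙 c) := ⟨by simp [hfac]⟩
  refine S.retract_Cof _ q
    ⟨𝟙 a, 𝟙 a, sq.lift, p, by simp, sq.fac_right, ?_, ?_⟩ hq
  · simpa using sq.fac_left.symm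
  · simp [hfac]

/-- Ken Brown's lemma (in the form needed here): a functor sending trivial cofibrations
to weak equivalences sends weak equivalences between cofibrant objects to weak
equivalences. -/
lemma brown {C : Type u₁} {E : Type u₃} [Category.{v₁} C] [Category.{v₃} E] [HasInitial C]
    (SC : ModelStructure C) (SE : ModelStructure E) (F : C ⥤ E)
    (hF : ∀ {a b : C} (f : a ⟶ b), SC.Cof f → SC.W f → SE.W (F.map f))
    {c₁ c₂ : C} (w : c₁ ⟶ c₂) (h₁ : SC.Cofibrant c₁) (h₂ : SC.Cofibrant c₂)
    (hw : SC.W w) : SE.W (F.map w) := by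
  -- factor `w = q ≫ p` with `q` a (trivial) cofibration and `p` a trivial fibration
  obtain ⟨z, q, p, hq, hpW, hpF, hfac⟩ := SC.fact_Cof_trivFib w
  have hqW : SC.W q := SC.W_of_postcomp q p hpW (by rw [hfac]; exact hw)
  have hz : SC.Cofibrant z := by
    have e : initial.to z = initial.to c₁ ≫ q := initialIsInitial.hom_ext _ _
    rw [ModelStructure.Cofibrant, e]
    exact SC.Cof_comp h₁ hq
  -- a section `s` of `p`
  haveI := SC.lift_Cof_trivFib (initial.to c₂) p h₂ hpW hpF
  have sq1 : CommSq (initial.to z) (initial.to c₂) p (𝟙 c₂) :=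
    ⟨initialIsInitial.hom_ext _ _⟩
  set s : c₂ ⟶ z := sq1.lift with hs
  have hsp : s ≫ p = 𝟙 c₂ := sq1.fac_right
  have hsW : SC.W s := SC.W_of_postcomp s p hpW (by rw [hsp]; exact SC.id_W c₂)
  -- factor `s = j ≫ r` with `j` a trivial cofibration and `r` a fibration (hence trivial)
  obtain ⟨z', j, r, hj, hjW, hrF, hjr⟩ := SC.fact_trivCof_Fib s
  have hrW : SC.W r := SC.W_of_precomp j r hjW (by rw [hjr]; exact hsW)
  have hz' : SC.Cofibrant z' := by
    have e : initial.to z' = initial.to c₂ ≫ j := initialIsInitial.hom_ext _ _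
    rw [ModelStructure.Cofibrant, e]
    exact SC.Cof_comp h₂ hj
  -- `j` is a section of `r ≫ p`, hence `F (r ≫ p)` is a weak equivalence
  have hcomp : j ≫ (r ≫ p) = 𝟙 c₂ := by rw [← Category.assoc, hjr, hsp]
  have hFj : SE.W (F.map j) := hF j hj hjW
  have hFrp : SE.W (F.map (r ≫ p)) := by
    refine SE.W_of_precomp (F.map j) (F.map (r ≫ p)) hFj ?_
    rw [← F.map_comp, hcomp, F.map_id]
    exact SE.id_W _
  -- a section `t` of `r`
  haveI := SC.lift_Cof_trivFib (initial.to z) r hz hrW hrF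
  have sq2 : CommSq (initial.to z') (initial.to z) r (𝟙 z) :=
    ⟨initialIsInitial.hom_ext _ _⟩
  set t : z ⟶ z' := sq2.lift with htdef
  have htr : t ≫ r = 𝟙 z := sq2.fac_right
  -- `F p` is a retract of `F (r ≫ p)`
  have hret : IsRetract (F.map p) (F.map (r ≫ p)) := by
    refine ⟨F.map t, F.map r, 𝟙 _, 𝟙 _, ?_, by simp, ?_, ?_⟩
    · rw [← F.map_comp, htr, F.map_id]
    · rw [Category.comp_id, ← F.map_comp, ← Category.assoc, htr, Category.id_comp]
    · rw [Category.comp_id, F.map_comp]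
  have hFp : SE.W (F.map p) := SE.retract_W _ _ hret hFrp
  have hFq : SE.W (F.map q) := hF q hq hqW
  rw [← hfac, F.map_comp]
  exact SE.W_comp hFq hFp

end Paper

end Aux

/-- Given a two-variable Quillen adjunction `T : C ⥤ D ⥤ E`, if
`w : c₁ ⟶ c₂` is a weak equivalence between cofibrant objects of `C` and `d` is cofibrant
in `D`, then `T(w, d)` is a weak equivalence in `E`; and symmetrically, if `v : d₁ ⟶ d₂`
is a weak equivalence between cofibrant objects of `D` and `c` is cofibrant in `C`, then
`T(c, v)` is a weak equivalence in `E`. -/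
theorem two_variable_quillen_adjunction_preserves_weak_equivalences_between_cofibrants
    {C : Type u₁} {D : Type u₂} {E : Type u₃}
    [Category.{v₁} C] [Category.{v₂} D] [Category.{v₃} E]
    [HasInitial C] [HasInitial D] [HasPushouts E]
    (SC : ModelStructure C) (SD : ModelStructure D) (SE : ModelStructure E)
    (T : C ⥤ D ⥤ E)
    (hadj₁ : ∀ c : C, (T.obj c).IsLeftAdjoint)
    (hadj₂ : ∀ d : D, (T.flip.obj d).IsLeftAdjoint)
    (hpp_cof : ∀ {c₁ c₂ : C} {d₁ d₂ : D} (f : c₁ ⟶ c₂) (g : d₁ ⟶ d₂),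
      SC.Cof f → SD.Cof g → SE.Cof (ppCorner T f g))
    (hpp_we : ∀ {c₁ c₂ : C} {d₁ d₂ : D} (f : c₁ ⟶ c₂) (g : d₁ ⟶ d₂),
      SC.Cof f → SD.Cof g → (SC.W f ∨ SD.W g) → SE.W (ppCorner T f g)) :
    (∀ {c₁ c₂ : C} (w : c₁ ⟶ c₂) (d : D), SC.Cofibrant c₁ → SC.Cofibrant c₂ →
      SC.W w → SD.Cofibrant d → SE.W ((T.flip.obj d).map w)) ∧
    (∀ {d₁ d₂ : D} (v : d₁ ⟶ d₂) (c : C), SD.Cofibrant d₁ → SD.Cofibrant d₂ →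
      SD.W v → SC.Cofibrant c → SE.W ((T.obj c).map v)) := by
  -- every functor `T (c, -)` and `T (-, d)` preserves initial objects
  haveI : ∀ c : C, PreservesColimitsOfSize.{0, 0} (T.obj c) := fun c =>
    haveI := hadj₁ c
    (Adjunction.ofIsLeftAdjoint (T.obj c)).leftAdjoint_preservesColimits
  haveI : ∀ d : D, PreservesColimitsOfSize.{0, 0} (T.flip.obj d) := fun d =>
    haveI := hadj₂ d
    (Adjunction.ofIsLeftAdjoint (T.flip.obj d)).leftAdjoint_preservesColimits
  -- `T (-, d)` sends trivial cofibrations to weak equivalences, for cofibrant `d`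
  have pres₁ : ∀ {c₁ c₂ : C} (f : c₁ ⟶ c₂) (d : D), SD.Cofibrant d →
      SC.Cof f → SC.W f → SE.W ((T.flip.obj d).map f) := by
    intro c₁ c₂ f d hd hf hfW
    have corner : SE.W (ppCorner T f (initial.to d)) :=
      hpp_we f (initial.to d) hf hd (Or.inl hfW)
    have i₁ : IsInitial ((T.obj c₁).obj (⊥_ D)) :=
      initialIsInitial.isInitialObj (T.obj c₁) (⊥_ D)
    have i₂ : IsInitial ((T.obj c₂).obj (⊥_ D)) :=
      initialIsInitial.isInitialObj (T.obj c₂) (⊥_ D)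
    haveI : IsIso ((T.map f).app (⊥_ D)) := isIso_of_isInitial i₁ i₂ _
    haveI : IsIso (pushout.inr ((T.map f).app (⊥_ D)) ((T.obj c₁).map (initial.to d))) :=
      pushout_inr_iso_of_left_iso _ _
    have hinr : SE.W (pushout.inr ((T.map f).app (⊥_ D)) ((T.obj c₁).map (initial.to d))) :=
      SE.iso_W _ (inferInstanceAs (IsIso _))
    have hcomp : pushout.inr ((T.map f).app (⊥_ D)) ((T.obj c₁).map (initial.to d)) ≫
        ppCorner T f (initial.to d) = (T.map f).app d :=
      pushout.inr_desc _ _ _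
    have := SE.W_comp hinr corner
    rw [hcomp] at this
    exact this
  -- `T (c, -)` sends trivial cofibrations to weak equivalences, for cofibrant `c`
  have pres₂ : ∀ {d₁ d₂ : D} (g : d₁ ⟶ d₂) (c : C), SC.Cofibrant c →
      SD.Cof g → SD.W g → SE.W ((T.obj c).map g) := by
    intro d₁ d₂ g c hc hg hgW
    have corner : SE.W (ppCorner T (initial.to c) g) :=
      hpp_we (initial.to c) g hc hg (Or.inr hgW)
    have i₁ : IsInitial ((T.obj (⊥_ C)).obj d₁) :=
      initialIsInitial.isInitialObj (T.flip.obj d₁) (⊥_ C)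
    have i₂ : IsInitial ((T.obj (⊥_ C)).obj d₂) :=
      initialIsInitial.isInitialObj (T.flip.obj d₂) (⊥_ C)
    haveI : IsIso ((T.obj (⊥_ C)).map g) := isIso_of_isInitial i₁ i₂ _
    haveI : IsIso (pushout.inl ((T.map (initial.to c)).app d₁) ((T.obj (⊥_ C)).map g)) :=
      pushout_inl_iso_of_right_iso _ _
    have hinl : SE.W (pushout.inl ((T.map (initial.to c)).app d₁) ((T.obj (⊥_ C)).map g)) :=
      SE.iso_W _ (inferInstanceAs (IsIso _))
    have hcomp : pushout.inl ((T.map (initial.to c)).app d₁) ((T.obj (⊥_ C)).map g) ≫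
        ppCorner T (initial.to c) g = (T.obj c).map g :=
      pushout.inl_desc _ _ _
    have := SE.W_comp hinl corner
    rw [hcomp] at this
    exact this
  constructor
  · intro c₁ c₂ w d h₁ h₂ hw hd
    exact brown SC SE (T.flip.obj d) (fun f hf hfW => pres₁ f d hd hf hfW) w h₁ h₂ hw
  · intro d₁ d₂ v c h₁ h₂ hv hc
    exact brown SD SE (T.obj c) (fun g hg hgW => pres₂ g c hc hg hgW) v h₁ h₂ hv

end Statement12
end
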